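/- arXiv:1403.5378 — 4 statements merged into one kernel-verified Lean document; each statement's English description precedes it below -/
import Mathlib

section
/- If p(t) and q(t) are polynomials with nonnegative, symmetric, and unimodal coefficient sequences, then their product p(t)q(t) also has nonnegative, symmetric, and unimodal coefficients. -/
/-!
Multiplying by `1 - X` takes first differences of coefficients, so it suffices to show
`[tⁿ] ((1 - X) p q) ≥ 0` for `2n ≤ d + e + 1`, where `p, q` have degrees `d, e`.
Since `q` is palindromic, `r = (1 - X) q` is antipalindromic of degree `e + 1`; pairing the
terms `j` and `e + 1 - j` of `[tⁿ] (r p) = ∑ⱼ rⱼ [tⁿ⁻ʲ] p` gives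
`2 [tⁿ] (r p) = ∑ⱼ rⱼ ([tⁿ⁻ʲ] p - [tⁿ⁻⁽ᵉ⁺¹⁻ʲ⁾] p)`.
For `2j ≤ e + 1` both factors of a summand are nonnegative, because `q` rises towards its centre
and `n - j` is the index nearer to the centre of `p`; for `2j > e + 1` both are nonpositive.
-/

open Finset Polynomial

namespace Polynomial

variable {R : Type*}

section Semiring

variable [Semiring R]

theorem reflect_eq_self_iff {p : R[X]} {N : ℕ} :
    reflect N p = p ↔ ∀ i ≤ N, p.coeff i = p.coeff (N - i) := by
  refine ⟨fun h i hi => ?_, fun h => ext fun i => ?_⟩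
  · conv_lhs => rw [← h]
    rw [coeff_reflect, revAt_le hi]
  · rw [coeff_reflect]
    rcases le_or_gt i N with hi | hi
    · rw [revAt_le hi, h i hi]
    · rw [revAt_eq_self_of_lt hi]

theorem coeff_mul_eq_sum_coeff_X_pow_mul {r : R[X]} {M : ℕ} (hr : r.natDegree ≤ M)
    (p : R[X]) (n : ℕ) :
    (r * p).coeff n = ∑ j ∈ range (M + 1), r.coeff j * (X ^ j * p).coeff n := by
  conv_lhs => rw [r.as_sum_range_C_mul_X_pow' (Nat.lt_succ_of_le hr)]
  simp only [Finset.sum_mul, finsetSum_coeff, mul_assoc, coeff_C_mul]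

end Semiring

section CommRing

variable [CommRing R]

theorem coeff_one_sub_X_mul_zero (p : R[X]) : ((1 - X) * p).coeff 0 = p.coeff 0 := by
  simp [sub_mul]

theorem coeff_one_sub_X_mul_succ (p : R[X]) (n : ℕ) :
    ((1 - X) * p).coeff (n + 1) = p.coeff (n + 1) - p.coeff n := by
  simp [sub_mul]

theorem reflect_one_sub_X_mul {p : R[X]} {N : ℕ} (hdeg : p.natDegree ≤ N)
    (hp : reflect N p = p) : reflect (N + 1) ((1 - X) * p) = -((1 - X) * p) := by
  have h1X : (1 - X : R[X]).natDegree ≤ 1 := by compute_degree!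
  rw [add_comm, reflect_mul _ _ h1X hdeg, hp, reflect_sub, reflect_one, reflect_one_X]
  ring

theorem two_mul_coeff_mul_of_reflect_eq_neg {r : R[X]} {M : ℕ} (hdeg : r.natDegree ≤ M)
    (hr : reflect M r = -r) (p : R[X]) (n : ℕ) :
    2 * (r * p).coeff n =
      ∑ j ∈ range (M + 1), r.coeff j * ((X ^ j * p).coeff n - (X ^ (M - j) * p).coeff n) := by
  have hdeg' : (reflect M r).natDegree ≤ M := by rwa [hr, natDegree_neg]
  have hrefl :
      (r * p).coeff n = -∑ j ∈ range (M + 1), r.coeff j * (X ^ (M - j) * p).coeff n := by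
    have hrp : r * p = -(reflect M r * p) := by rw [hr]; ring
    rw [hrp, coeff_neg, neg_inj, coeff_mul_eq_sum_coeff_X_pow_mul hdeg', ← sum_range_reflect]
    refine sum_congr rfl fun j hj => ?_
    rw [mem_range] at hj
    rw [coeff_reflect, revAt_le (by omega), add_tsub_cancel_right, Nat.sub_sub_self (by omega)]
  rw [two_mul]
  nth_rewrite 2 [hrefl]
  rw [coeff_mul_eq_sum_coeff_X_pow_mul hdeg, ← sub_eq_add_neg, ← sum_sub_distrib]
  simp only [mul_sub]

end CommRing

section Ordered

variable [CommRing R] [LinearOrder R]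

/-- `p` has nonnegative coefficients, is palindromic of length `N + 1`, and its coefficients
rise towards the centre `N / 2`; for nonnegative sequences this is symmetry together with
unimodality. -/
structure IsSymmUnimodal (p : R[X]) (N : ℕ) : Prop where
  coeff_nonneg : ∀ n, 0 ≤ p.coeff n
  natDegree_le : p.natDegree ≤ N
  reflect_eq : reflect N p = p
  coeff_mono : ∀ i j, i ≤ j → i + j ≤ N → p.coeff i ≤ p.coeff j

theorem coeff_mono_of_coeff_one_sub_X_mul_nonneg [IsOrderedAddMonoid R] {f : R[X]} {N : ℕ}
    (hf : reflect N f = f)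
    (h : ∀ n, 2 * n ≤ N + 1 → 0 ≤ ((1 - X) * f).coeff n) :
    ∀ i j, i ≤ j → i + j ≤ N → f.coeff i ≤ f.coeff j := by
  have hlow : ∀ i j, i ≤ j → 2 * j ≤ N + 1 → f.coeff i ≤ f.coeff j := by
    intro i j hij hj
    induction j, hij using Nat.le_induction with
    | base => exact le_rfl
    | succ m _ ih =>
      have hstep := h (m + 1) hj
      rw [coeff_one_sub_X_mul_succ, sub_nonneg] at hstep
      exact (ih (by omega)).trans hstep
  intro i j hij hijN
  rcases le_or_gt (2 * j) (N + 1) with hj | hj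
  · exact hlow i j hij hj
  · rw [reflect_eq_self_iff.1 hf j (by omega)]
    exact hlow i (N - j) (by omega) (by omega)

theorem isSymmUnimodal_of_unimodal {p : R[X]} (h0 : ∀ i, 0 ≤ p.coeff i)
    (hs : ∀ i ≤ p.natDegree, p.coeff i = p.coeff (p.natDegree - i))
    (hu : ∃ k ≤ p.natDegree, (∀ i j, i ≤ j → j ≤ k → p.coeff i ≤ p.coeff j) ∧
      (∀ i j, k ≤ i → i ≤ j → p.coeff j ≤ p.coeff i)) :
    IsSymmUnimodal p p.natDegree where
  coeff_nonneg := h0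
  natDegree_le := le_rfl
  reflect_eq := reflect_eq_self_iff.2 hs
  coeff_mono i j hij hijN := by
    obtain ⟨k, -, hinc, hdec⟩ := hu
    rcases le_or_gt j k with hjk | hjk
    · exact hinc i j hij hjk
    · rw [hs i (by omega)]
      exact hdec j _ hjk.le (by omega)

namespace IsSymmUnimodal

variable {p q : R[X]} {d e : ℕ}

theorem zero (N : ℕ) : IsSymmUnimodal (0 : R[X]) N where
  coeff_nonneg _ := le_rfl
  natDegree_le := by simp
  reflect_eq := reflect_zero
  coeff_mono _ _ _ _ := le_rfl

theorem exists_unimodal (hp : IsSymmUnimodal p d) :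
    ∃ k ≤ d, (∀ i j, i ≤ j → j ≤ k → p.coeff i ≤ p.coeff j) ∧
      (∀ i j, k ≤ i → i ≤ j → p.coeff j ≤ p.coeff i) := by
  refine ⟨d / 2, Nat.div_le_self _ _, fun i j hij hj => hp.coeff_mono i j hij (by omega),
    fun i j hi hij => ?_⟩
  rcases hij.eq_or_lt with rfl | hij
  · exact le_rfl
  rcases le_or_gt j d with hj | hj
  · have hs := reflect_eq_self_iff.1 hp.reflect_eq
    rw [hs i (by omega), hs j hj]
    exact hp.coeff_mono _ _ (by omega) (by omega)
  · rw [coeff_eq_zero_of_natDegree_lt (hp.natDegree_le.trans_lt hj)]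
    exact hp.coeff_nonneg i

theorem coeff_one_sub_X_mul_nonneg [IsOrderedAddMonoid R] (hp : IsSymmUnimodal p d) {n : ℕ}
    (hn : 2 * n ≤ d + 1) : 0 ≤ ((1 - X) * p).coeff n := by
  cases n with
  | zero => rw [coeff_one_sub_X_mul_zero]; exact hp.coeff_nonneg 0
  | succ m =>
    rw [coeff_one_sub_X_mul_succ, sub_nonneg]
    exact hp.coeff_mono m (m + 1) (by omega) (by omega)

theorem coeff_X_pow_mul_le (hp : IsSymmUnimodal p d) {i k n : ℕ} (hik : i ≤ k)
    (hn : 2 * n ≤ d + i + k) : (X ^ k * p).coeff n ≤ (X ^ i * p).coeff n := by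
  rw [coeff_X_pow_mul', coeff_X_pow_mul']
  split_ifs
  · exact hp.coeff_mono _ _ (by omega) (by omega)
  · omega
  · exact hp.coeff_nonneg _
  · exact le_rfl

theorem coeff_one_sub_X_mul_mul_nonneg [IsStrictOrderedRing R] (hp : IsSymmUnimodal p d)
    (hq : IsSymmUnimodal q e) {n : ℕ} (hn : 2 * n ≤ d + e + 1) :
    0 ≤ ((1 - X) * (p * q)).coeff n := by
  set r := (1 - X) * q
  have hr : reflect (e + 1) r = -r := reflect_one_sub_X_mul hq.natDegree_le hq.reflect_eq
  have hdeg : r.natDegree ≤ e + 1 := by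
    have h1X : (1 - X : R[X]).natDegree ≤ 1 := by compute_degree!
    have hq' := hq.natDegree_le
    exact natDegree_mul_le.trans (by omega)
  have hanti : ∀ j ≤ e + 1, r.coeff j = -r.coeff (e + 1 - j) := by
    intro j hj
    rw [← coeff_neg, ← hr, coeff_reflect, revAt_le (by omega), Nat.sub_sub_self hj]
  have hcomm : (1 - X) * (p * q) = r * p := by ring
  rw [hcomm]
  refine nonneg_of_mul_nonneg_right ?_ (zero_lt_two : (0 : R) < 2)
  rw [two_mul_coeff_mul_of_reflect_eq_neg hdeg hr]
  refine sum_nonneg fun j hj => ?_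
  rw [mem_range] at hj
  rcases le_or_gt (2 * j) (e + 1) with hje | hje
  · exact mul_nonneg (hq.coeff_one_sub_X_mul_nonneg hje)
      (sub_nonneg.2 (hp.coeff_X_pow_mul_le (by omega) (by omega)))
  · refine mul_nonneg_of_nonpos_of_nonpos ?_
      (sub_nonpos.2 (hp.coeff_X_pow_mul_le (by omega) (by omega)))
    rw [hanti j (by omega), neg_nonpos]
    exact hq.coeff_one_sub_X_mul_nonneg (by omega)

theorem mul [IsStrictOrderedRing R] (hp : IsSymmUnimodal p d) (hq : IsSymmUnimodal q e) :
    IsSymmUnimodal (p * q) (d + e) := by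
  have hrefl : reflect (d + e) (p * q) = p * q := by
    rw [reflect_mul _ _ hp.natDegree_le hq.natDegree_le, hp.reflect_eq, hq.reflect_eq]
  refine ⟨fun n => ?_, natDegree_mul_le.trans (add_le_add hp.natDegree_le hq.natDegree_le),
    hrefl, coeff_mono_of_coeff_one_sub_X_mul_nonneg hrefl fun n hn =>
      hp.coeff_one_sub_X_mul_mul_nonneg hq hn⟩
  rw [coeff_mul]
  exact sum_nonneg fun x _ => mul_nonneg (hp.coeff_nonneg _) (hq.coeff_nonneg _)

end IsSymmUnimodal

end Ordered

end Polynomial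

/-- If p(t) and q(t) are polynomials with nonnegative, symmetric, and
unimodal coefficient sequences, then their product p(t)q(t) also has nonnegative,
symmetric, and unimodal coefficients. -/
theorem stmt_0 (p q : Polynomial ℝ)
    (hp0 : ∀ i, 0 ≤ p.coeff i) (hq0 : ∀ i, 0 ≤ q.coeff i)
    (hps : ∀ i ≤ p.natDegree, p.coeff i = p.coeff (p.natDegree - i))
    (hqs : ∀ i ≤ q.natDegree, q.coeff i = q.coeff (q.natDegree - i))
    (hpu : ∃ k ≤ p.natDegree, (∀ i j, i ≤ j → j ≤ k → p.coeff i ≤ p.coeff j) ∧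
      (∀ i j, k ≤ i → i ≤ j → p.coeff j ≤ p.coeff i))
    (hqu : ∃ k ≤ q.natDegree, (∀ i j, i ≤ j → j ≤ k → q.coeff i ≤ q.coeff j) ∧
      (∀ i j, k ≤ i → i ≤ j → q.coeff j ≤ q.coeff i)) :
    (∀ i, 0 ≤ (p * q).coeff i) ∧
    (∀ i ≤ (p * q).natDegree, (p * q).coeff i = (p * q).coeff ((p * q).natDegree - i)) ∧
    (∃ k ≤ (p * q).natDegree,
      (∀ i j, i ≤ j → j ≤ k → (p * q).coeff i ≤ (p * q).coeff j) ∧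
      (∀ i j, k ≤ i → i ≤ j → (p * q).coeff j ≤ (p * q).coeff i)) := by
  have hpq : IsSymmUnimodal (p * q) (p * q).natDegree := by
    rcases eq_or_ne (p * q) 0 with h | h
    · rw [h]
      exact IsSymmUnimodal.zero _
    · rw [natDegree_mul (left_ne_zero_of_mul h) (right_ne_zero_of_mul h)]
      exact (isSymmUnimodal_of_unimodal hp0 hps hpu).mul
        (isSymmUnimodal_of_unimodal hq0 hqs hqu)
  exact ⟨hpq.coeff_nonneg, reflect_eq_self_iff.1 hpq.reflect_eq, hpq.exists_unimodal⟩
end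

section
/- If P and Q are reflexive polytopes in R^n with 0 in the interior of P such that P ⊕ Q = conv(P ∪ Q) is a free sum, then the h*-polynomial of P ⊕ Q equals the product of the h*-polynomials of P and Q: h*_{P⊕Q}(t) = h*_P(t) · h*_Q(t). -/
/-!
For a reflexive `P` the polar dual is spanned by lattice points `u`, so a lattice point `x`
lies in `a • P` (`a > 0`) exactly when `a` is at least the integer `max_u x ⬝ᵥ u`: the level of
a lattice point is an integer. Hence a real splitting `a + b = k` witnessing that a lattice point
`(x, y)` lies in `k • (P ⊕ Q)` can be rounded to an integer splitting `i + j = k` with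
`x ∈ i • P` and `y ∈ j • Q`. Sorting `y` by the first `j` with `y ∈ j • Q` gives
`#(k • (P ⊕ Q)) = ∑_{i + j = k} #(i • P) · #(j • Q \ (j - 1) • Q)`, that is
`Ehr_{P ⊕ Q} = Ehr_P · Ehr_Q · (1 - t)`, which is the product formula for the `h*`-polynomials
after multiplying by `(1 - t) ^ (n + m + 1)`.
-/

/-- `x` is an integer (lattice) point. -/
def isInt {n : ℕ} (x : Fin n → ℝ) : Prop := ∀ j, ∃ z : ℤ, x j = (z : ℝ)

/-- `P` is a lattice polytope: the convex hull of finitely many lattice points. -/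
def isLatticePolytope {n : ℕ} (P : Set (Fin n → ℝ)) : Prop :=
  ∃ V : Finset (Fin n → ℝ), (∀ v ∈ V, isInt v) ∧ P = convexHull ℝ (V : Set (Fin n → ℝ))

/-- The polar dual `P^Δ = {y : x·y ≤ 1 for all x ∈ P}`. -/
def polarDual {n : ℕ} (P : Set (Fin n → ℝ)) : Set (Fin n → ℝ) :=
  {y : Fin n → ℝ | ∀ x ∈ P, ∑ j, x j * y j ≤ 1}

/-- A reflexive polytope (with the origin in its interior). -/
def isReflexive0 {n : ℕ} (P : Set (Fin n → ℝ)) : Prop :=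
  isLatticePolytope P ∧ (0 : Fin n → ℝ) ∈ interior P ∧ isLatticePolytope (polarDual P)

/-- A reflexive polytope in the wider sense: a lattice translate of a reflexive
polytope containing the origin in its interior. -/
def isReflexive {n : ℕ} (P : Set (Fin n → ℝ)) : Prop :=
  ∃ t : Fin n → ℝ, isInt t ∧ isReflexive0 ((fun x => x - t) '' P)


open Pointwise in
/-- The Ehrhart series of `P`: the power series whose `m`-th coefficient is the number
of lattice points of the `m`-th dilate `mP`. -/
noncomputable def ehr {n : ℕ} (P : Set (Fin n → ℝ)) : PowerSeries ℚ :=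
  PowerSeries.mk fun m => (Set.ncard {x : Fin n → ℝ | x ∈ (m : ℝ) • P ∧ isInt x} : ℚ)


open Pointwise Finset

section LatticePoints

variable {n m : ℕ}

def latticePoints (S : Set (Fin n → ℝ)) : Set (Fin n → ℝ) := {x | x ∈ S ∧ isInt x}

theorem coeff_ehr (P : Set (Fin n → ℝ)) (k : ℕ) :
    PowerSeries.coeff k (ehr P) = ((latticePoints ((k : ℝ) • P)).ncard : ℚ) :=
  PowerSeries.coeff_mk _ _

theorem isInt_iff_mem_span {x : Fin n → ℝ} :
    isInt x ↔ x ∈ Submodule.span ℤ (Set.range (Pi.basisFun ℝ (Fin n))) := by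
  simp [Module.Basis.mem_span_iff_repr_mem, isInt, eq_comm]

theorem Bornology.IsBounded.finite_latticePoints {S : Set (Fin n → ℝ)}
    (hS : Bornology.IsBounded S) : (latticePoints S).Finite :=
  (ZSpan.setFinite_inter _ hS).subset fun _ hx => ⟨hx.1, isInt_iff_mem_span.mp hx.2⟩

theorem isInt.exists_dotProduct_eq {x u : Fin n → ℝ} (hx : isInt x) (hu : isInt u) :
    ∃ z : ℤ, x ⬝ᵥ u = z := by
  choose a ha using hx
  choose b hb using hu
  exact ⟨∑ j, a j * b j, by simp [dotProduct, ha, hb]⟩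

theorem isInt_append_iff {x : Fin n → ℝ} {y : Fin m → ℝ} :
    isInt (Fin.append x y) ↔ isInt x ∧ isInt y := by
  simp only [isInt, Fin.forall_fin_add, Fin.append_left, Fin.append_right]

end LatticePoints

theorem Convex.smul_subset_smul_of_le {𝕜 E : Type*} [Field 𝕜] [LinearOrder 𝕜]
    [IsStrictOrderedRing 𝕜] [AddCommGroup E] [Module 𝕜 E] {s : Set E} (hs : Convex 𝕜 s)
    (h0 : 0 ∈ s) {a b : 𝕜} (ha : 0 ≤ a) (hab : a ≤ b) : a • s ⊆ b • s := by
  rw [← add_sub_cancel a b, hs.add_smul ha (sub_nonneg.2 hab)]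
  exact Set.subset_add_left _ (Set.zero_mem_smul_set h0)

theorem monotone_latticePoints_natCast_smul {n : ℕ} {S : Set (Fin n → ℝ)} (hS : Convex ℝ S)
    (h0 : 0 ∈ S) : Monotone fun k : ℕ => latticePoints ((k : ℝ) • S) :=
  fun _ _ hij _ hx =>
    ⟨hS.smul_subset_smul_of_le h0 (Nat.cast_nonneg _) (Nat.cast_le.2 hij) hx.1, hx.2⟩

section Polar

variable {n : ℕ} {P : Set (Fin n → ℝ)}

theorem mem_polarDual {y : Fin n → ℝ} : y ∈ polarDual P ↔ ∀ x ∈ P, x ⬝ᵥ y ≤ 1 := Iff.rfl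

theorem polarDual_polarDual (hc : Convex ℝ P) (hcl : IsClosed P) (h0 : 0 ∈ P) :
    polarDual (polarDual P) = P := by
  refine subset_antisymm (fun x hx => ?_) fun x hx y hy => ?_
  · by_contra hxP
    obtain ⟨f, u, hfP, hfx⟩ := geometric_hahn_banach_closed_point hc hcl hxP
    have hu : 0 < u := by simpa using hfP 0 h0
    set v := (dotProductEquiv ℝ (Fin n)).symm f.toLinearMap
    have hf : ∀ w, f w = v ⬝ᵥ w := fun w => by
      simp [v, ← dotProductEquiv_apply_apply, LinearEquiv.apply_symm_apply]
    have hv : u⁻¹ • v ∈ polarDual P := mem_polarDual.2 fun p hp => by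
      rw [dotProduct_smul, dotProduct_comm, ← hf, smul_eq_mul, inv_mul_le_one₀ hu]
      exact (hfP p hp).le
    have := mem_polarDual.1 hx _ hv
    rw [smul_dotProduct, ← hf, smul_eq_mul, inv_mul_le_one₀ hu] at this
    exact this.not_gt hfx
  · exact (dotProduct_comm y x).trans_le (hy x hx)

theorem mem_smul_iff_forall_dotProduct_le (hc : Convex ℝ P) (hcl : IsClosed P) (h0 : 0 ∈ P)
    {U : Finset (Fin n → ℝ)} (hU : polarDual P = convexHull ℝ U) {a : ℝ} (ha : 0 < a)
    (x : Fin n → ℝ) : x ∈ a • P ↔ ∀ u ∈ U, x ⬝ᵥ u ≤ a := by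
  have hhalf : Convex ℝ {u | u ⬝ᵥ (a⁻¹ • x) ≤ 1} :=
    convex_halfSpace_le ⟨fun _ _ => add_dotProduct _ _ _, fun c y => smul_dotProduct c y _⟩ 1
  rw [Set.mem_smul_set_iff_inv_smul_mem₀ ha.ne', ← polarDual_polarDual hc hcl h0, mem_polarDual,
    hU]
  change convexHull ℝ _ ⊆ {u | u ⬝ᵥ (a⁻¹ • x) ≤ 1} ↔ _
  rw [hhalf.convexHull_subset_iff]
  simp only [Set.subset_def, Finset.mem_coe, Set.mem_ofPred_eq, dotProduct_smul, smul_eq_mul,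
    inv_mul_le_iff₀ ha, mul_one, dotProduct_comm _ x]

end Polar

section Level

variable {n : ℕ} {P : Set (Fin n → ℝ)}

theorem isLatticePolytope.convex (h : isLatticePolytope P) : Convex ℝ P := by
  obtain ⟨V, -, rfl⟩ := h
  exact convex_convexHull ℝ _

theorem isLatticePolytope.isCompact (h : isLatticePolytope P) : IsCompact P := by
  obtain ⟨V, -, rfl⟩ := h
  exact V.finite_toSet.isCompact_convexHull (𝕜 := ℝ)

theorem Bornology.IsBounded.exists_notMem_smul {E : Type*} [NormedAddCommGroup E]
    [NormedSpace ℝ E] {s : Set E} (hs : Bornology.IsBounded s) {x : E} (hx : x ≠ 0) :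
    ∃ a : ℝ, 0 < a ∧ x ∉ a • s := by
  obtain ⟨R, hR, hsR⟩ := hs.exists_pos_norm_le
  have hx' := norm_pos_iff.2 hx
  refine ⟨‖x‖ / (2 * R), by positivity, fun ⟨y, hy, hyx⟩ => ?_⟩
  have : ‖x‖ ≤ ‖x‖ / 2 :=
    calc ‖x‖ = ‖(‖x‖ / (2 * R)) • y‖ := congrArg norm hyx.symm
      _ = ‖x‖ / (2 * R) * ‖y‖ := by rw [norm_smul, Real.norm_of_nonneg (by positivity)]
      _ ≤ ‖x‖ / (2 * R) * R := by gcongr; exact hsR y hy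
      _ = ‖x‖ / 2 := by field_simp
  linarith

/-- `L` is the largest value of `x ⬝ᵥ u` over the lattice points `u` spanning the polar dual,
an integer, and positive for `x ≠ 0` because `P` is bounded. -/
theorem isReflexive0.exists_level (hP : isReflexive0 P) {x : Fin n → ℝ} (hx : isInt x) :
    ∃ L : ℕ, ∀ a : ℝ, 0 ≤ a → (x ∈ a • P ↔ (L : ℝ) ≤ a) := by
  obtain ⟨hlat, h0int, U, hUint, hU⟩ := hP
  have h0 : (0 : Fin n → ℝ) ∈ P := interior_subset h0int
  rcases eq_or_ne x 0 with rfl | hx0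
  · exact ⟨0, fun a ha => by simpa [ha] using Set.zero_mem_smul_set (a := a) h0⟩
  have hUne : U.Nonempty := by
    have h0U : (0 : Fin n → ℝ) ∈ polarDual P := fun p _ => by simp
    rw [hU] at h0U
    simpa using convexHull_nonempty_iff.1 ⟨_, h0U⟩
  obtain ⟨u₀, hu₀, hmax⟩ := U.exists_max_image (x ⬝ᵥ ·) hUne
  obtain ⟨z, hz⟩ := hx.exists_dotProduct_eq (hUint u₀ hu₀)
  have hlevel : ∀ a : ℝ, 0 < a → (x ∈ a • P ↔ (z : ℝ) ≤ a) := fun a ha => by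
    rw [mem_smul_iff_forall_dotProduct_le hlat.convex hlat.isCompact.isClosed h0 hU ha, ← hz]
    exact ⟨fun h => h u₀ hu₀, fun h u hu => (hmax u hu).trans h⟩
  have hz0 : 0 < z := by
    obtain ⟨a, ha, hxa⟩ := hlat.isCompact.isBounded.exists_notMem_smul hx0
    by_contra! hz0
    exact hxa ((hlevel a ha).2 ((Int.cast_nonpos.2 hz0).trans ha.le))
  refine ⟨z.toNat, fun a ha => ?_⟩
  rw [show ((z.toNat : ℕ) : ℝ) = z by exact_mod_cast Int.toNat_of_nonneg hz0.le]
  rcases ha.eq_or_lt with rfl | ha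
  · simp [Set.zero_smul_set ⟨0, h0⟩, hx0, hz0]
  · exact hlevel a ha

end Level

section FreeSum

variable {n m : ℕ}

theorem Fin.append_add_append {α : Type*} [Add α] (x x' : Fin n → α) (y y' : Fin m → α) :
    Fin.append x y + Fin.append x' y' = Fin.append (x + x') (y + y') := by
  funext i
  refine Fin.addCases (fun i => ?_) (fun i => ?_) i <;> simp

theorem Fin.smul_append {M α : Type*} [SMul M α] (c : M) (x : Fin n → α) (y : Fin m → α) :
    c • Fin.append x y = Fin.append (c • x) (c • y) := by
  funext i
  refine Fin.addCases (fun i => ?_) (fun i => ?_) i <;> simp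

theorem Fin.append_inj_iff {α : Type*} {x x' : Fin n → α} {y y' : Fin m → α} :
    Fin.append x y = Fin.append x' y' ↔ x = x' ∧ y = y' :=
  ((Fin.appendEquiv n m).injective.eq_iff (a := (x, y)) (b := (x', y'))).trans Prod.ext_iff

theorem Fin.append_zero_zero {α : Type*} [Zero α] :
    Fin.append (0 : Fin n → α) (0 : Fin m → α) = 0 := by
  funext i
  refine Fin.addCases (fun i => ?_) (fun i => ?_) i <;> simp

def freeSum (P : Set (Fin n → ℝ)) (Q : Set (Fin m → ℝ)) : Set (Fin (n + m) → ℝ) :=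
  convexHull ℝ ((fun p : Fin n → ℝ => Fin.append p (0 : Fin m → ℝ)) '' P ∪
    (fun q : Fin m → ℝ => Fin.append (0 : Fin n → ℝ) q) '' Q)

variable {P : Set (Fin n → ℝ)} {Q : Set (Fin m → ℝ)}

theorem append_mem_freeSum_iff (hP : Convex ℝ P) (hQ : Convex ℝ Q) (hPne : P.Nonempty)
    (hQne : Q.Nonempty) (x : Fin n → ℝ) (y : Fin m → ℝ) :
    Fin.append x y ∈ freeSum P Q ↔
      ∃ a b : ℝ, 0 ≤ a ∧ 0 ≤ b ∧ a + b = 1 ∧ x ∈ a • P ∧ y ∈ b • Q := by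
  have hinl : IsLinearMap ℝ fun p : Fin n → ℝ => Fin.append p (0 : Fin m → ℝ) :=
    ⟨fun p p' => by rw [Fin.append_add_append, add_zero], fun c p => by
      rw [Fin.smul_append, smul_zero]⟩
  have hinr : IsLinearMap ℝ fun q : Fin m → ℝ => Fin.append (0 : Fin n → ℝ) q :=
    ⟨fun q q' => by rw [Fin.append_add_append, add_zero], fun c q => by
      rw [Fin.smul_append, smul_zero]⟩
  rw [freeSum, convexHull_union (hPne.image _) (hQne.image _),
    (hP.is_linear_image hinl).convexHull_eq, (hQ.is_linear_image hinr).convexHull_eq,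
    mem_convexJoin]
  simp only [Set.mem_image, segment, Set.mem_ofPred_eq, Set.mem_smul_set, exists_exists_and_eq_and,
    Fin.smul_append, Fin.append_add_append, smul_zero, add_zero, zero_add, Fin.append_inj_iff]
  constructor
  · rintro ⟨p, hp, q, hq, a, b, ha, hb, hab, rfl, rfl⟩
    exact ⟨a, b, ha, hb, hab, ⟨p, hp, rfl⟩, q, hq, rfl⟩
  · rintro ⟨a, b, ha, hb, hab, ⟨p, hp, rfl⟩, q, hq, rfl⟩
    exact ⟨p, hp, q, hq, a, b, ha, hb, hab, rfl, rfl⟩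

theorem append_mem_smul_freeSum_iff (hP : Convex ℝ P) (hQ : Convex ℝ Q) (hPne : P.Nonempty)
    (hQne : Q.Nonempty) {c : ℝ} (hc : 0 ≤ c) (x : Fin n → ℝ) (y : Fin m → ℝ) :
    Fin.append x y ∈ c • freeSum P Q ↔
      ∃ a b : ℝ, 0 ≤ a ∧ 0 ≤ b ∧ a + b = c ∧ x ∈ a • P ∧ y ∈ b • Q := by
  rcases hc.eq_or_lt with rfl | hc
  · obtain ⟨p, hp⟩ := hPne
    have hne : (freeSum P Q).Nonempty :=
      ⟨_, subset_convexHull ℝ _ (Set.mem_union_left _ (Set.mem_image_of_mem _ hp))⟩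
    rw [Set.zero_smul_set hne, Set.mem_zero, ← Fin.append_zero_zero, Fin.append_inj_iff]
    constructor
    · rintro ⟨rfl, rfl⟩
      exact ⟨0, 0, le_rfl, le_rfl, add_zero 0, by simp [Set.zero_smul_set ⟨p, hp⟩],
        by simp [Set.zero_smul_set hQne]⟩
    · rintro ⟨a, b, ha, hb, hab, hx, hy⟩
      obtain rfl : a = 0 := by linarith
      obtain rfl : b = 0 := by linarith
      rw [Set.zero_smul_set ⟨p, hp⟩] at hx
      rw [Set.zero_smul_set hQne] at hy
      exact ⟨hx, hy⟩
  · have hscale : ∀ {k : ℕ} {S : Set (Fin k → ℝ)} (a : ℝ) (z : Fin k → ℝ),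
        c⁻¹ • z ∈ a • S ↔ z ∈ (c * a) • S := fun a z => by
      rw [mul_smul, Set.mem_smul_set_iff_inv_smul_mem₀ hc.ne' (a • _)]
    rw [Set.mem_smul_set_iff_inv_smul_mem₀ hc.ne', Fin.smul_append,
      append_mem_freeSum_iff hP hQ hPne hQne]
    simp only [hscale]
    constructor
    · rintro ⟨a, b, ha, hb, hab, hx, hy⟩
      exact ⟨c * a, c * b, by positivity, by positivity, by rw [← mul_add, hab, mul_one], hx, hy⟩
    · rintro ⟨a, b, ha, hb, hab, hx, hy⟩
      refine ⟨a / c, b / c, by positivity, by positivity,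
        by rw [← add_div, hab, div_self hc.ne'], ?_, ?_⟩ <;> rwa [mul_div_cancel₀ _ hc.ne']

theorem append_mem_natCast_smul_freeSum_iff (hP : isReflexive0 P) (hQ : Convex ℝ Q)
    (h0Q : 0 ∈ Q) {x : Fin n → ℝ} (hx : isInt x) (y : Fin m → ℝ) (k : ℕ) :
    Fin.append x y ∈ (k : ℝ) • freeSum P Q ↔
      ∃ p ∈ antidiagonal k, x ∈ (p.1 : ℝ) • P ∧ y ∈ (p.2 : ℝ) • Q := by
  have h0P : (0 : Fin n → ℝ) ∈ P := interior_subset hP.2.1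
  rw [append_mem_smul_freeSum_iff hP.1.convex hQ ⟨0, h0P⟩ ⟨0, h0Q⟩ k.cast_nonneg]
  obtain ⟨L, hL⟩ := hP.exists_level hx
  constructor
  · rintro ⟨a, b, ha, hb, hab, hxa, hyb⟩
    have hLa : (L : ℝ) ≤ a := (hL a ha).1 hxa
    have hLk : L ≤ k := by exact_mod_cast (by linarith : (L : ℝ) ≤ k)
    refine ⟨(L, k - L), mem_antidiagonal.2 (Nat.add_sub_cancel' hLk),
      (hL L L.cast_nonneg).2 le_rfl, hQ.smul_subset_smul_of_le h0Q hb ?_ hyb⟩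
    rw [Nat.cast_sub hLk]
    linarith
  · rintro ⟨⟨i, j⟩, hij, hxi, hyj⟩
    exact ⟨i, j, i.cast_nonneg, j.cast_nonneg, by exact_mod_cast mem_antidiagonal.1 hij, hxi, hyj⟩

theorem latticePoints_natCast_smul_freeSum (hP : isReflexive0 P) (hQ : Convex ℝ Q)
    (h0Q : 0 ∈ Q) (k : ℕ) :
    latticePoints ((k : ℝ) • freeSum P Q) = Fin.appendEquiv n m ''
      ⋃ p ∈ antidiagonal k, latticePoints ((p.1 : ℝ) • P) ×ˢ latticePoints ((p.2 : ℝ) • Q) := by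
  ext z
  obtain ⟨⟨x, y⟩, rfl⟩ := (Fin.appendEquiv n m).surjective z
  rw [(Fin.appendEquiv n m).injective.mem_set_image]
  change Fin.append x y ∈ _ ↔ _
  simp only [latticePoints, Set.mem_ofPred_eq, isInt_append_iff, Set.mem_iUnion, Set.mem_prod,
    exists_prop]
  constructor
  · rintro ⟨hmem, hx, hy⟩
    obtain ⟨p, hp, hxp, hyp⟩ := (append_mem_natCast_smul_freeSum_iff hP hQ h0Q hx y k).1 hmem
    exact ⟨p, hp, ⟨hxp, hx⟩, hyp, hy⟩
  · rintro ⟨p, hp, ⟨hxp, hx⟩, hyp, hy⟩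
    exact ⟨(append_mem_natCast_smul_freeSum_iff hP hQ h0Q hx y k).2 ⟨p, hp, hxp, hyp⟩, hx, hy⟩

end FreeSum

section Convolution

variable {α β R : Type*} [CommRing R] {s : ℕ → Set α} {t : ℕ → Set β}

theorem biUnion_antidiagonal_prod_eq_disjointed (hs : Monotone s) (k : ℕ) :
    ⋃ p ∈ antidiagonal k, s p.1 ×ˢ t p.2 = ⋃ p ∈ antidiagonal k, s p.1 ×ˢ disjointed t p.2 := by
  refine subset_antisymm ?_
    (Set.biUnion_mono subset_rfl fun p _ => Set.prod_mono subset_rfl (disjointed_le t p.2))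
  refine Set.iUnion₂_subset fun ⟨i, j⟩ hij => ?_
  rintro ⟨x, y⟩ ⟨hx, hy⟩
  have hij : i + j = k := mem_antidiagonal.1 hij
  have : y ∈ ⋃ l ∈ range (j + 1), disjointed t l := by
    rw [biUnion_range_succ_disjointed]
    exact le_partialSups t j hy
  simp only [Set.mem_iUnion, mem_range, exists_prop] at this
  obtain ⟨l, hl, hyl⟩ := this
  exact Set.mem_biUnion (x := (k - l, l)) (mem_antidiagonal.2 (by omega))
    ⟨hs (by omega : i ≤ k - l) hx, hyl⟩

theorem ncard_biUnion_antidiagonal_prod (hs : Monotone s) (hsf : ∀ i, (s i).Finite)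
    (htf : ∀ j, (t j).Finite) (k : ℕ) :
    (⋃ p ∈ antidiagonal k, s p.1 ×ˢ t p.2).ncard =
      ∑ p ∈ antidiagonal k, (s p.1).ncard * (disjointed t p.2).ncard := by
  rw [biUnion_antidiagonal_prod_eq_disjointed hs, ← Finset.set_biUnion_coe,
    (antidiagonal k).finite_toSet.ncard_biUnion, finsum_mem_coe_finset]
  · exact sum_congr rfl fun _ _ => Set.ncard_prod
  · exact fun p _ => (hsf _).prod ((htf _).subset (disjointed_le t _))
  · intro p hp q hq hpq
    have h2 : p.2 ≠ q.2 := fun h => hpq <| Prod.ext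
      (by have := mem_antidiagonal.1 hp; have := mem_antidiagonal.1 hq; omega) h
    exact Set.disjoint_prod.2 (Or.inr (disjoint_disjointed t h2))

theorem PowerSeries.mk_ncard_disjointed (ht : Monotone t) (htf : ∀ j, (t j).Finite) :
    PowerSeries.mk (fun j => ((disjointed t j).ncard : R)) =
      PowerSeries.mk (fun j => ((t j).ncard : R)) * (1 - PowerSeries.X) := by
  ext (_ | j)
  · simp
  · rw [mul_sub, mul_one, map_sub, PowerSeries.coeff_succ_mul_X, coeff_mk, coeff_mk, coeff_mk,
      ht.disjointed_add_one, Set.ncard_sdiff (ht (Nat.le_add_right j 1)) (htf j),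
      Nat.cast_sub (Set.ncard_le_ncard (ht (Nat.le_add_right j 1)) (htf _))]

theorem PowerSeries.mk_ncard_biUnion_antidiagonal_prod (hs : Monotone s) (ht : Monotone t)
    (hsf : ∀ i, (s i).Finite) (htf : ∀ j, (t j).Finite) :
    PowerSeries.mk (fun k => ((⋃ p ∈ antidiagonal k, s p.1 ×ˢ t p.2).ncard : R)) =
      PowerSeries.mk (fun i => ((s i).ncard : R)) * PowerSeries.mk (fun j => ((t j).ncard : R)) *
        (1 - PowerSeries.X) := by
  rw [mul_assoc, ← PowerSeries.mk_ncard_disjointed ht htf]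
  ext k
  simp only [PowerSeries.coeff_mk, PowerSeries.coeff_mul,
    ncard_biUnion_antidiagonal_prod hs hsf htf, Nat.cast_sum, Nat.cast_mul]

end Convolution

section Ehrhart

variable {n m : ℕ} {P : Set (Fin n → ℝ)} {Q : Set (Fin m → ℝ)}

theorem isReflexive.convex (hQ : isReflexive Q) : Convex ℝ Q := by
  obtain ⟨t, -, hR⟩ := hQ
  simpa [Set.image_image] using hR.1.convex.translate t

theorem isReflexive.isBounded (hQ : isReflexive Q) : Bornology.IsBounded Q := by
  obtain ⟨t, -, hR⟩ := hQ
  simpa [Set.image_image] using (hR.1.isCompact.image (continuous_const_add t)).isBounded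

theorem ehr_freeSum (hP : isReflexive0 P) (hQ : Convex ℝ Q) (h0Q : 0 ∈ Q)
    (hQb : Bornology.IsBounded Q) :
    ehr (freeSum P Q) = ehr P * ehr Q * (1 - PowerSeries.X) := by
  have hfin : ∀ {d : ℕ} {S : Set (Fin d → ℝ)}, Bornology.IsBounded S →
      ∀ i : ℕ, (latticePoints ((i : ℝ) • S)).Finite :=
    fun hS _ => (hS.smul₀ _).finite_latticePoints
  have hcount : ehr (freeSum P Q) = PowerSeries.mk fun k => ((⋃ p ∈ antidiagonal k,
      latticePoints ((p.1 : ℝ) • P) ×ˢ latticePoints ((p.2 : ℝ) • Q)).ncard : ℚ) := by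
    ext k
    rw [coeff_ehr, latticePoints_natCast_smul_freeSum hP hQ h0Q,
      Set.ncard_image_of_injective _ (Equiv.injective _), PowerSeries.coeff_mk]
  rw [hcount, PowerSeries.mk_ncard_biUnion_antidiagonal_prod
    (monotone_latticePoints_natCast_smul hP.1.convex (interior_subset hP.2.1))
    (monotone_latticePoints_natCast_smul hQ h0Q) (hfin hP.1.isCompact.isBounded) (hfin hQb)]
  rfl

end Ehrhart

/-- If `P` and `Q` are reflexive polytopes with `0` in the interior of `P`
such that `P ⊕ Q = conv(P ∪ Q)` is a free sum (here realized with `P` and `Q` lying in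
orthogonal coordinate subspaces and `P ∩ Q = {0}`), then the h*-polynomial of `P ⊕ Q`
is the product of those of `P` and `Q`. -/
theorem stmt_4 (n m : ℕ) (P : Set (Fin n → ℝ)) (Q : Set (Fin m → ℝ))
    (hP : isReflexive0 P) (hQ : isReflexive Q) (h0Q : (0 : Fin m → ℝ) ∈ Q)
    (hp hq hpq : Polynomial ℚ)
    (hhp : (hp : PowerSeries ℚ) = ehr P * (1 - PowerSeries.X) ^ (n + 1))
    (hhq : (hq : PowerSeries ℚ) = ehr Q * (1 - PowerSeries.X) ^ (m + 1))
    (hhpq : (hpq : PowerSeries ℚ) =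
      ehr (convexHull ℝ
        ((fun p : Fin n → ℝ => Fin.append p (0 : Fin m → ℝ)) '' P ∪
         (fun q : Fin m → ℝ => Fin.append (0 : Fin n → ℝ) q) '' Q)) *
        (1 - PowerSeries.X) ^ (n + m + 1)) :
    hpq = hp * hq := by
  apply Polynomial.coe_inj.mp
  rw [Polynomial.coe_mul, hhpq, hhp, hhq, ← freeSum, ehr_freeSum hP hQ.convex h0Q hQ.isBounded]
  ring
end

section
/- For d ≥ 3, the simplex Δ with vertices e_1, ..., e_d, (-d, -d-1, ..., -d-1) in R^d is integrally closed: every lattice point of mΔ (m a positive integer) is a sum of m lattice points of Δ. -/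
open Pointwise in
/-- `P` is integrally closed: every lattice point of the dilate `mP` is a sum of `m`
lattice points of `P`. -/
def isIntegrallyClosed {n : ℕ} (P : Set (Fin n → ℝ)) : Prop :=
  ∀ m : ℕ, 0 < m → ∀ x ∈ (m : ℝ) • P, isInt x →
    ∃ f : Fin m → Fin n → ℝ, (∀ k, f k ∈ P ∧ isInt (f k)) ∧ x = ∑ k, f k


/-- The vertices `e_1, ..., e_d, (-d, -d-1, ..., -d-1)` of the simplex `Δ_Q` with
`Q = (1, d, d+1, ..., d+1)`. -/
noncomputable def dVert (d : ℕ) : Fin (d+1) → Fin d → ℝ :=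
  Fin.snoc (fun k j => if j = k then 1 else 0)
    (fun j => if (j : ℕ) = 0 then -(d : ℝ) else -(d : ℝ) - 1)


/-!
Suitably scaled, the barycentric coordinates of a lattice point of `c • Δ` are integers, and a point
lies in `c • Δ` iff they are nonnegative. If a lattice point `y` of `Δ` has coordinates below those
of a lattice point `z` of `(m + 1) • Δ`, then `z - y` lies in `m • Δ`, so by induction on `m` it
suffices to find such a `y` for `m ≥ 1`. A vertex `e_j` with `j ≠ 0` does unless all coordinates of
`z` but the first equal `-⌊(m + 1 - ∑ z) / d⌋`; then `0`, `-𝟙` or a lattice point on the edge from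
`e_0` to the last vertex does, by a divisibility argument.
-/

theorem Fin.snoc_le_snoc_iff {n : ℕ} {α : Type*} [Preorder α] {a a' : Fin n → α} {b b' : α} :
    (Fin.snoc a b : Fin (n + 1) → α) ≤ Fin.snoc a' b' ↔ a ≤ a' ∧ b ≤ b' := by
  simp [Pi.le_def, Fin.forall_iff_castSucc, and_comm]

section ConvexHull

open Set

variable {ι E : Type*} [Fintype ι] [AddCommGroup E] [Module ℝ E]

theorem convexHull_range_eq_image_stdSimplex (f : ι → E) :
    convexHull ℝ (range f) = (fun w => ∑ i, w i • f i) '' stdSimplex ℝ ι := by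
  classical
  have h := (Fintype.linearCombination ℝ f).image_convexHull
    (range fun i j : ι => if i = j then (1 : ℝ) else 0)
  rw [convexHull_basis_eq_stdSimplex, ← range_comp] at h
  convert h.symm using 3
  · ext i
    simp [Fintype.linearCombination_apply, ite_smul]
  · exact (Fintype.linearCombination_apply ℝ f _).symm

open Pointwise in
theorem mem_smul_convexHull_range_iff {c : ℝ} (hc : 0 < c) (f : ι → E) (x : E) :
    x ∈ c • convexHull ℝ (range f) ↔
      ∃ w : ι → ℝ, (∀ i, 0 ≤ w i) ∧ ∑ i, w i = c ∧ ∑ i, w i • f i = x := by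
  rw [convexHull_range_eq_image_stdSimplex, mem_smul_set]
  constructor
  · rintro ⟨_, ⟨w, ⟨hw₀, hw₁⟩, rfl⟩, rfl⟩
    exact ⟨c • w, fun i => mul_nonneg hc.le (hw₀ i), by simp [← Finset.mul_sum, hw₁],
      by simp [Finset.smul_sum, smul_smul]⟩
  · rintro ⟨w, hw₀, hw₁, rfl⟩
    refine ⟨_, ⟨c⁻¹ • w, ⟨fun i => mul_nonneg (inv_nonneg.2 hc.le) (hw₀ i), ?_⟩, rfl⟩, ?_⟩
    · simp [← Finset.mul_sum, hw₁, hc.ne']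
    · simp [Finset.smul_sum, smul_smul, hc.ne']

end ConvexHull

section SnocBasis

open Set

variable {d : ℕ}

theorem sum_smul_snoc_basis_apply (v : Fin d → ℝ) (w : Fin (d + 1) → ℝ) (j : Fin d) :
    (∑ i, w i • (Fin.snoc (fun k j => if j = k then 1 else 0) v : Fin (d + 1) → Fin d → ℝ) i) j
      = w j.castSucc + w (Fin.last d) * v j := by
  simp [Fin.sum_univ_castSucc, Finset.sum_apply]

open Pointwise in
theorem mem_smul_convexHull_snoc_basis_iff (v : Fin d → ℝ) (hv : ∑ j, v j < 1) {c : ℝ}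
    (hc : 0 < c) (x : Fin d → ℝ) :
    x ∈ c • convexHull ℝ
        (range (Fin.snoc (fun k j => if j = k then 1 else 0) v : Fin (d + 1) → Fin d → ℝ)) ↔
      0 ≤ c - ∑ j, x j ∧ ∀ j, 0 ≤ (1 - ∑ j, v j) * x j - v j * (c - ∑ j, x j) := by
  have hN : 0 < 1 - ∑ j, v j := sub_pos.2 hv
  rw [mem_smul_convexHull_range_iff hc]
  constructor
  · rintro ⟨w, hw₀, hw₁, rfl⟩
    simp only [sum_smul_snoc_basis_apply]
    have hs : c - ∑ j, (w j.castSucc + w (Fin.last d) * v j) =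
        w (Fin.last d) * (1 - ∑ j, v j) := by
      rw [← hw₁, Fin.sum_univ_castSucc, Finset.sum_add_distrib, ← Finset.mul_sum]
      ring
    refine ⟨hs ▸ mul_nonneg (hw₀ _) hN.le, fun j => ?_⟩
    rw [hs]
    nlinarith [hw₀ j.castSucc]
  · rintro ⟨hs, hx⟩
    refine ⟨Fin.snoc (fun j => ((1 - ∑ j, v j) * x j - v j * (c - ∑ j, x j)) / (1 - ∑ j, v j))
      ((c - ∑ j, x j) / (1 - ∑ j, v j)), fun i => ?_, ?_, ?_⟩
    · induction i using Fin.lastCases with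
      | last => simpa using div_nonneg hs hN.le
      | cast j => simpa using div_nonneg (hx j) hN.le
    · rw [Fin.sum_univ_castSucc]
      simp only [Fin.snoc_last, Fin.snoc_castSucc, ← Finset.sum_div, Finset.sum_sub_distrib,
        ← Finset.mul_sum, ← Finset.sum_mul]
      field_simp
      ring
    · ext j
      rw [sum_smul_snoc_basis_apply]
      simp only [Fin.snoc_last, Fin.snoc_castSucc]
      field_simp
      ring

end SnocBasis

section DVert

open Set

variable {d : ℕ}

def dWeight (d : ℕ) (j : Fin d) : ℤ := if (j : ℕ) = 0 then d + 1 else d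

theorem dWeight_zero [NeZero d] : dWeight d 0 = d + 1 := by simp [dWeight]

theorem dWeight_of_ne_zero [NeZero d] {j : Fin d} (hj : j ≠ 0) : dWeight d j = d := by
  simp [dWeight, Fin.val_eq_zero_iff, hj]

theorem dVert_last_apply (j : Fin d) :
    dVert d (Fin.last d) j = if (j : ℕ) = 0 then -(d : ℝ) else -(d : ℝ) - 1 := by
  simp [dVert]

theorem dWeight_mul_dVert_last (j : Fin d) :
    (dWeight d j : ℝ) * dVert d (Fin.last d) j = -(d * (d + 1)) := by
  rw [dVert_last_apply, dWeight]
  split_ifs <;> push_cast <;> ring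

theorem sum_dVert_last [NeZero d] : ∑ j, dVert d (Fin.last d) j = 1 - d * (d + 1) := by
  have hv : ∀ j, dVert d (Fin.last d) j = (if j = 0 then 1 else 0) + (-d - 1) := by
    intro j
    simp only [dVert_last_apply, Fin.val_eq_zero_iff]
    split_ifs <;> ring
  simp only [hv, Finset.sum_add_distrib, Finset.sum_ite_eq', Finset.mem_univ, if_true,
    Finset.sum_const, Finset.card_univ, Fintype.card_fin, nsmul_eq_mul]
  ring

open Pointwise in
theorem mem_smul_convexHull_dVert_iff [NeZero d] {c : ℝ} (hc : 0 < c) (x : Fin d → ℝ) :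
    x ∈ c • convexHull ℝ (range (dVert d)) ↔
      0 ≤ c - ∑ j, x j ∧ ∀ j, 0 ≤ (dWeight d j : ℝ) * x j + (c - ∑ j, x j) := by
  have hd : (1 : ℝ) ≤ d := by exact_mod_cast NeZero.one_le
  have hsnoc : dVert d = Fin.snoc (fun k j => if j = k then 1 else 0) (dVert d (Fin.last d)) := by
    simp [dVert]
  rw [hsnoc, mem_smul_convexHull_snoc_basis_iff _ (by rw [sum_dVert_last]; nlinarith) hc,
    sum_dVert_last]
  refine and_congr_right fun _ => forall_congr' fun j => ?_
  have hv : 0 < -dVert d (Fin.last d) j := by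
    rw [dVert_last_apply]; split_ifs <;> linarith
  rw [show (1 - (1 - (d : ℝ) * (d + 1))) * x j - dVert d (Fin.last d) j * (c - ∑ j, x j) =
    -dVert d (Fin.last d) j * ((dWeight d j : ℝ) * x j + (c - ∑ j, x j)) by
      linear_combination x j * dWeight_mul_dVert_last j]
  exact mul_nonneg_iff_of_pos_left hv

end DVert

section BaryCoord

open Function Set

variable {d : ℕ}

/-- The barycentric coordinates of `z` in `c • Δ`, the one at `e_j` multiplied by `dWeight d j` and
the one at the last vertex by `d * (d + 1)`; they are integral because
`dWeight d j * dVert d (Fin.last d) j = -d * (d + 1)`. -/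
def baryCoord (d : ℕ) (c : ℤ) (z : Fin d → ℤ) : Fin (d + 1) → ℤ :=
  Fin.snoc (fun j => dWeight d j * z j + (c - ∑ i, z i)) (c - ∑ i, z i)

theorem baryCoord_sub (c c' : ℤ) (z y : Fin d → ℤ) :
    baryCoord d (c - c') (z - y) = baryCoord d c z - baryCoord d c' y := by
  ext i
  induction i using Fin.lastCases <;> simp [baryCoord, Finset.sum_sub_distrib] <;> ring

theorem zero_le_baryCoord_iff {c : ℤ} {z : Fin d → ℤ} :
    0 ≤ baryCoord d c z ↔ 0 ≤ c - ∑ j, z j ∧ ∀ j, 0 ≤ dWeight d j * z j + (c - ∑ j, z j) := by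
  simp [baryCoord, Pi.le_def, Fin.forall_iff_castSucc]

open Pointwise in
theorem cast_mem_smul_convexHull_dVert_iff [NeZero d] {m : ℕ} (hm : 0 < m) (z : Fin d → ℤ) :
    (fun j => (z j : ℝ)) ∈ (m : ℝ) • convexHull ℝ (range (dVert d)) ↔ 0 ≤ baryCoord d m z := by
  rw [mem_smul_convexHull_dVert_iff (by exact_mod_cast hm), zero_le_baryCoord_iff]
  norm_cast

open Pointwise in
theorem cast_mem_convexHull_dVert_iff [NeZero d] (z : Fin d → ℤ) :
    (fun j => (z j : ℝ)) ∈ convexHull ℝ (range (dVert d)) ↔ 0 ≤ baryCoord d 1 z := by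
  simpa using cast_mem_smul_convexHull_dVert_iff one_pos z

theorem baryCoord_one_single (j : Fin d) :
    baryCoord d 1 (Pi.single j 1) = Fin.snoc (Pi.single j (dWeight d j)) 0 := by
  ext i
  induction i using Fin.lastCases with
  | last => simp [baryCoord]
  | cast i => by_cases h : i = j <;> simp [baryCoord, h]

theorem sum_update_const [NeZero d] (a b : ℤ) :
    ∑ j, update (fun _ : Fin d => b) 0 a j = a + (d - 1) * b := by
  rw [Finset.sum_update_of_mem (Finset.mem_univ 0)]
  simp [Finset.card_sdiff, Nat.cast_sub NeZero.one_le]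

theorem baryCoord_update_const [NeZero d] {c a b a' b' t : ℤ} (ht : t = c - a - (d - 1) * b)
    (ha' : a' = (d + 1) * a + t) (hb' : b' = d * b + t) :
    baryCoord d c (update (fun _ => b) 0 a) = Fin.snoc (update (fun _ => b') 0 a') t := by
  ext i
  induction i using Fin.lastCases with
  | last => simp [baryCoord, sum_update_const, ht, sub_add_eq_sub_sub]
  | cast i =>
    by_cases h : i = 0
    · subst h
      simp [baryCoord, sum_update_const, dWeight_zero, ha', ht, sub_add_eq_sub_sub]
    · simp [baryCoord, sum_update_const, dWeight_of_ne_zero h, h, hb', ht, sub_add_eq_sub_sub]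

theorem snoc_update_const_mem_Icc [NeZero d] {a b t a' b' t' : ℤ} (ha : a ∈ Icc 0 a')
    (hb : b ∈ Icc 0 b') (ht : t ∈ Icc 0 t') :
    (Fin.snoc (update (fun _ : Fin d => b) 0 a) t : Fin (d + 1) → ℤ) ∈
      Icc 0 (Fin.snoc (update (fun _ => b') 0 a') t') := by
  constructor <;> intro i <;> induction i using Fin.lastCases with
  | last => simp [ht.1, ht.2]
  | cast i => by_cases h : i = 0 <;> simp [h, ha.1, ha.2, hb.1, hb.2]

end BaryCoord

section Decomposition

open Function Set

variable {d : ℕ} [NeZero d]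

theorem baryCoord_one_single_mem_Icc {c : ℤ} {z : Fin d → ℤ} {j : Fin d} (hj : j ≠ 0)
    (hz : 0 ≤ baryCoord d c z) (hdj : d ≤ dWeight d j * z j + (c - ∑ i, z i)) :
    baryCoord d 1 (Pi.single j 1) ∈ Icc 0 (baryCoord d c z) := by
  obtain ⟨hS, hA⟩ := zero_le_baryCoord_iff.1 hz
  rw [baryCoord_one_single, dWeight_of_ne_zero hj]
  refine ⟨fun i => ?_, Fin.snoc_le_snoc_iff.2 ⟨fun i => ?_, hS⟩⟩
  · induction i using Fin.lastCases with
    | last => simp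
    | cast i => by_cases h : i = j <;> simp [h]
  · by_cases h : i = j
    · subst h
      simpa using hdj
    · simpa [h] using hA i

/-- The case of a lattice point of `(m + 1) • Δ` whose coordinates other than the first all equal
`-q`; its scaled barycentric coordinates are then `a`, `β`, ..., `β` and `s`. -/
theorem exists_baryCoord_one_mem_Icc_of_uniform {m : ℕ} (hm : 1 ≤ m) {a s q β : ℤ}
    (ha : 0 ≤ a) (hq : 0 ≤ q) (hβ : 0 ≤ β) (hβd : β < d) (hs : s = d * q + β)
    (hsum : a + d * β + q = (m + 1) * (d + 1)) :
    ∃ y, baryCoord d 1 y ∈ Icc 0 (Fin.snoc (update (fun _ => β) 0 a) s) := by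
  have hd : (1 : ℤ) ≤ d := by exact_mod_cast NeZero.one_le
  have hm₁ : (1 : ℤ) ≤ m := by exact_mod_cast hm
  rcases hβ.eq_or_lt with hβ | hβ
  · set k := min q (d + 1)
    have hk : k = q ∨ k = d + 1 := min_choice _ _
    have hkq : d * k ≤ d * q := mul_le_mul_of_nonneg_left (min_le_left _ _) (by omega)
    refine ⟨update (fun _ => -k) 0 (1 - k), ?_⟩
    rw [baryCoord_update_const (a' := d + 1 - k) (b' := 0) (t := d * k)
      (by ring) (by ring) (by ring)]
    refine snoc_update_const_mem_Icc ⟨?_, ?_⟩ ⟨le_rfl, hβ.le⟩ ⟨?_, by omega⟩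
    · linarith [min_le_right q (d + 1)]
    · rcases hk with hk | hk <;> nlinarith
    · have : 0 ≤ k := le_min hq (by omega)
      positivity
  rcases hq.eq_or_lt with rfl | hq
  · have ha : 1 ≤ a := by
      by_contra! ha
      obtain rfl : a = 0 := by omega
      have h1 : d * (β - m - 1) = m + 1 := by linear_combination hsum
      have h2 : 0 < β - m - 1 := pos_of_mul_pos_right (by omega) (by omega : (0 : ℤ) ≤ d)
      have h3 : (d : ℤ) ≤ m + 1 := by nlinarith
      omega
    refine ⟨update (fun _ => 0) 0 0, ?_⟩
    rw [baryCoord_update_const (a' := 1) (b' := 1) (t := 1) (by ring) (by ring) (by ring)]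
    exact snoc_update_const_mem_Icc ⟨zero_le_one, ha⟩ ⟨zero_le_one, hβ⟩
      ⟨zero_le_one, by rw [hs, mul_zero]; omega⟩
  · refine ⟨update (fun _ => -1) 0 (-1), ?_⟩
    rw [baryCoord_update_const (a' := 0) (b' := 1) (t := d + 1) (by ring) (by ring) (by ring)]
    exact snoc_update_const_mem_Icc ⟨le_rfl, ha⟩ ⟨zero_le_one, hβ⟩ ⟨by omega, by nlinarith⟩

theorem exists_baryCoord_one_mem_Icc {m : ℕ} (hm : 1 ≤ m) {z : Fin d → ℤ}
    (hz : 0 ≤ baryCoord d (m + 1) z) :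
    ∃ y, baryCoord d 1 y ∈ Icc 0 (baryCoord d (m + 1) z) := by
  obtain ⟨hS, hA⟩ := zero_le_baryCoord_iff.1 hz
  set S := (m + 1 : ℤ) - ∑ j, z j with hS_def
  by_cases hbig : ∃ j ≠ 0, (d : ℤ) ≤ dWeight d j * z j + S
  · obtain ⟨j, hj, hdj⟩ := hbig
    exact ⟨Pi.single j 1, baryCoord_one_single_mem_Icc hj hz hdj⟩
  push Not at hbig
  have hd : (0 : ℤ) < d := by exact_mod_cast NeZero.pos d
  set q := S / d
  -- `0 ≤ d * z j + S < d` pins down `z j`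
  have hzj : ∀ j ≠ 0, z j = -q := by
    intro j hj
    have h := Int.ediv_eq_zero_of_lt (hA j) (hbig j hj)
    rw [dWeight_of_ne_zero hj, Int.mul_add_ediv_left _ _ hd.ne'] at h
    omega
  have hz_eq : z = update (fun _ => -q) 0 (z 0) := by
    ext j
    by_cases hj : j = 0
    · simp [hj]
    · simp [hj, hzj j hj]
  have hsum : ∑ j, z j = z 0 + (d - 1) * -q := by
    nth_rewrite 1 [hz_eq]
    exact sum_update_const _ _
  have hS' : S = m + 1 - z 0 - (d - 1) * -q := by rw [hS_def, hsum]; ring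
  have hβ : S % d = d * -q + S := by rw [Int.emod_def]; ring
  rw [hz_eq, baryCoord_update_const hS' rfl hβ]
  refine exists_baryCoord_one_mem_Icc_of_uniform hm ?_ (Int.ediv_nonneg hS hd.le)
    (Int.emod_nonneg _ hd.ne') (Int.emod_lt_of_pos _ hd) (by rw [Int.emod_def]; ring) ?_
  · simpa [dWeight_zero] using hA 0
  · linear_combination (d + 1 : ℤ) * hS' + d * hβ

theorem exists_sum_of_zero_le_baryCoord {m : ℕ} (hm : 1 ≤ m) {z : Fin d → ℤ}
    (hz : 0 ≤ baryCoord d m z) :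
    ∃ f : Fin m → Fin d → ℤ, (∀ k, 0 ≤ baryCoord d 1 (f k)) ∧ ∑ k, f k = z := by
  induction m, hm using Nat.le_induction generalizing z with
  | base => exact ⟨fun _ => z, fun _ => by simpa using hz, by simp⟩
  | succ m hm ih =>
    push_cast at hz
    obtain ⟨y, hy₀, hy⟩ := exists_baryCoord_one_mem_Icc hm hz
    have hzy : 0 ≤ baryCoord d m (z - y) := by
      simpa [← baryCoord_sub] using sub_nonneg.2 hy
    obtain ⟨f, hf, hfz⟩ := ih hzy
    refine ⟨Fin.snoc f y, fun k => ?_, ?_⟩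
    · induction k using Fin.lastCases <;> simp [hy₀, hf]
    · simp [Fin.sum_univ_castSucc, hfz]

end Decomposition

/-- For `d ≥ 3`, the simplex with vertices
`e_1, ..., e_d, (-d, -d-1, ..., -d-1)` is integrally closed. -/
theorem stmt_13 (d : ℕ) (hd : 3 ≤ d) :
    isIntegrallyClosed (convexHull ℝ (Set.range (dVert d))) := by
  have : NeZero d := ⟨by omega⟩
  intro m hm x hx hx_int
  choose z hz using hx_int
  obtain rfl : x = fun j => (z j : ℝ) := funext hz
  obtain ⟨f, hf, hfz⟩ :=
    exists_sum_of_zero_le_baryCoord hm ((cast_mem_smul_convexHull_dVert_iff hm z).1 hx)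
  refine ⟨fun k j => (f k j : ℝ), fun k => ⟨(cast_mem_convexHull_dVert_iff (f k)).2 (hf k),
    fun j => ⟨f k j, rfl⟩⟩, ?_⟩
  ext j
  simp [← hfz]
end

section
/- Any (d+1)×(d+1) matrix M over a field with the property that M is lower triangular with respect to some ordering of rows and columns and has at least one zero on the diagonal is singular; in particular, for the simplex Δ_Q with Q = (1, d, d+1, ..., d+1), the multiplication-by-l map from degree 1 to degree 2 in R_{Δ_Q} is not injective for any linear form l, so R_{Δ_Q} admits no weak Lefschetz element. -/
/-!
A matrix that becomes lower triangular after permuting its rows and columns has, up to sign,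
the determinant of the triangular matrix, i.e. the product of its diagonal, so one zero on that
diagonal makes it singular.

For `Δ_Q` the functional `x ↦ x₀ - 2 x₁` sends the lattice point `v_{i,r}` to `i`, so the
coefficient of `x^{v_{j,2}}` in `l · x^{v_{k,1}}` can only be nonzero when `k ≤ j`: the matrix of
multiplication by `l` is lower triangular. Its entry at `(2, 2)` would need `v_{2,1} = v_{2,2}`,
which fails in the first coordinate.
-/

/-- The lattice points of the fundamental parallelepiped of `Δ_Q`
(`Q = (1, d, d+1, ..., d+1)`) at height `r`: `pt d i r` is the point `v_{i,r}`
from the paper (forgetting the last coordinate, which is `r`). -/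
noncomputable def pt (d i r : ℕ) : Fin d → ℝ :=
  fun j => if i ≤ r then -(i : ℝ) else if (j : ℕ) = 0 then -(i : ℝ) + 2 else -(i : ℝ) + 1

namespace Matrix

variable {ι n R : Type*} [Fintype ι] [DecidableEq ι] [Fintype n] [DecidableEq n] [CommRing R]

theorem det_submatrix_eq_zero_iff (M : Matrix n n R) (σ τ : ι ≃ n) :
    (M.submatrix σ τ).det = 0 ↔ M.det = 0 := by
  have hsign : IsUnit ((Equiv.Perm.sign (τ.symm.trans σ) : ℤ) : R) :=
    (Units.isUnit _).map (Int.castRingHom R)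
  change (M.reindex σ.symm τ.symm).det = 0 ↔ _
  rw [det_reindex, Equiv.symm_symm, hsign.mul_right_eq_zero]

theorem det_eq_zero_of_isLowerTriangular [LinearOrder n] {M : Matrix n n R}
    (hM : M.IsLowerTriangular) (i : n) (hi : M i i = 0) : M.det = 0 := by
  rw [det_of_isLowerTriangular M hM]
  exact Finset.prod_eq_zero (Finset.mem_univ i) hi

theorem det_eq_zero_of_isLowerTriangular_submatrix [LinearOrder ι] (M : Matrix n n R)
    (σ τ : ι ≃ n) (hM : (M.submatrix σ τ).IsLowerTriangular) (i : ι)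
    (hi : M (σ i) (τ i) = 0) : M.det = 0 :=
  (det_submatrix_eq_zero_iff M σ τ).1 (det_eq_zero_of_isLowerTriangular hM i hi)

end Matrix

theorem pt_apply_zero_sub_two_mul_pt_apply_one {d : ℕ} (hd : 2 ≤ d) (i r : ℕ) :
    pt d i r ⟨0, by omega⟩ - 2 * pt d i r ⟨1, by omega⟩ = i := by
  unfold pt
  split_ifs <;> simp_all <;> ring

theorem add_eq_of_pt_add_pt_eq {d : ℕ} (hd : 2 ≤ d) {i j k : ℕ}
    (h : pt d k 1 + pt d i 1 = pt d j 2) : k + i = j := by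
  have key := pt_apply_zero_sub_two_mul_pt_apply_one hd
  have h0 := congrFun h ⟨0, by omega⟩
  have h1 := congrFun h ⟨1, by omega⟩
  simp only [Pi.add_apply] at h0 h1
  have : (k : ℝ) + i = j := by linear_combination -key k 1 - key i 1 + key j 2 + h0 - 2 * h1
  exact_mod_cast this

theorem pt_two_one_ne_pt_two_two {d : ℕ} (hd : 1 ≤ d) : pt d 2 1 ≠ pt d 2 2 := by
  intro h
  have := congrFun h ⟨0, by omega⟩
  norm_num [pt] at this

theorem pt_zero (d r : ℕ) : pt d 0 r = 0 := by
  ext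
  simp [pt]

section MultiplicationMatrix

variable {K : Type*} (d : ℕ)

/-- Multiplication by `l = Σ aᵢ x^{v_{i,1}} z` from `[R_{Δ_Q}]_1` to `[R_{Δ_Q}]_2`, in the bases
`v_{k,1}` (columns) and `v_{j,2}` (rows); products outside the fundamental parallelepiped vanish
in `R_{Δ_Q}`. -/
noncomputable def mulMatrix [AddCommMonoid K] (a : Fin (d + 2) → K) :
    Matrix (Fin (d + 2)) (Fin (d + 2)) K :=
  Matrix.of fun jj kk =>
    ∑ ii : Fin (d + 2), if pt d (kk : ℕ) 1 + pt d (ii : ℕ) 1 = pt d (jj : ℕ) 2 then a ii else 0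

variable {d}

theorem mulMatrix_isLowerTriangular [AddCommMonoid K] (a : Fin (d + 2) → K) (hd : 2 ≤ d) :
    (mulMatrix d a).IsLowerTriangular := by
  intro jj kk hlt
  refine (Matrix.of_apply _ jj kk).trans <| Finset.sum_eq_zero fun ii _ => if_neg fun h => ?_
  have := add_eq_of_pt_add_pt_eq hd h
  simp only [OrderDual.toDual_lt_toDual, Fin.lt_def] at hlt
  omega

theorem mulMatrix_two_two [AddCommMonoid K] (a : Fin (d + 2) → K) (hd : 2 ≤ d) :
    mulMatrix d a ⟨2, by omega⟩ ⟨2, by omega⟩ = 0 := by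
  refine (Matrix.of_apply _ _ _).trans <| Finset.sum_eq_zero fun ii _ => if_neg fun h => ?_
  have hii : (ii : ℕ) = 0 := by simpa using add_eq_of_pt_add_pt_eq hd h
  rw [hii, pt_zero, add_zero] at h
  exact pt_two_one_ne_pt_two_two (by omega) h

theorem not_injective_mulVec_mulMatrix [Field K] (a : Fin (d + 2) → K) (hd : 2 ≤ d) :
    ¬ Function.Injective (mulMatrix d a).mulVec := by
  rw [Matrix.mulVec_injective_iff_isUnit, Matrix.isUnit_iff_isUnit_det, isUnit_iff_ne_zero,
    not_not]
  exact Matrix.det_eq_zero_of_isLowerTriangular (mulMatrix_isLowerTriangular a hd) _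
    (mulMatrix_two_two a hd)

end MultiplicationMatrix

/-- Any square matrix over a field that is lower triangular with respect
to some ordering of its rows and columns and has a zero on the diagonal is singular; in
particular, for the simplex `Δ_Q` with `Q = (1, d, d+1, ..., d+1)` (`d ≥ 3`), the
multiplication map `[R_{Δ_Q}]_1 → [R_{Δ_Q}]_2` by any linear form
`l = Σ aᵢ x^{v_{i,1}} z` (expressed in the bases of fundamental-parallelepiped lattice
points `v_{k,1}` and `v_{j,2}`) is not injective, so `R_{Δ_Q}` admits no weak Lefschetz
element. -/
theorem stmt_15 :
    (∀ (F : Type) [Field F] (N : ℕ) (M : Matrix (Fin N) (Fin N) F)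
        (σ τ : Equiv.Perm (Fin N)),
        (∀ i j : Fin N, i < j → M (σ i) (τ j) = 0) → (∃ i, M (σ i) (τ i) = 0) →
        M.det = 0) ∧
    (∀ d : ℕ, 3 ≤ d → ∀ a : Fin (d+2) → ℂ,
      ¬ Function.Injective
        ((Matrix.of fun jj kk : Fin (d+2) =>
          ∑ ii : Fin (d+2),
            if pt d (kk : ℕ) 1 + pt d (ii : ℕ) 1 = pt d (jj : ℕ) 2 then a ii
            else 0).mulVec)) := by
  refine ⟨fun F _ N M σ τ hM ⟨i, hi⟩ => ?_, fun d hd a => ?_⟩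
  · exact M.det_eq_zero_of_isLowerTriangular_submatrix σ τ (fun i j hij => hM i j hij) i hi
  · exact not_injective_mulVec_mulMatrix a (by omega)
end
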